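/- arXiv:1506.07256 — 7 statements merged into one kernel-verified Lean document; each statement's English description precedes it below -/
import Mathlib

section
/- For every positive integer n, Frisch's identity holds: ∑_{i=0}^{2n-1} (-1)^i * C(2n-1, i) / (n + i) = (n-1)! * (2n-1)! / (3n-1)!. -/
/-!
The sum is the partial-fraction expansion of `m! / (x (x + 1) ⋯ (x + m))`, with `m = 2n - 1`.
Pascal's rule turns the sum `f_m(x)` into a difference equation `f_{m+1}(x) = f_m(x) - f_m(x + 1)`,
and `m! / (x)_{m+1}` (rising factorial) satisfies the same one, so both agree by induction on `m`.
At `x = n` the rising factorial `(n)_{2n}` is `(3n - 1)! / (n - 1)!`.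
-/

open Finset Polynomial Nat

variable {K : Type*} [Field K]

theorem sum_range_succ_alternating_choose_div (m : ℕ) (x : K) :
    ∑ i ∈ range (m + 2), (-1) ^ i * ((m + 1).choose i : K) / (x + i) =
      ∑ i ∈ range (m + 1), (-1) ^ i * (m.choose i : K) / (x + i) -
        ∑ i ∈ range (m + 1), (-1) ^ i * (m.choose i : K) / (x + 1 + i) := by
  have hextend : ∑ i ∈ range (m + 1), (-1) ^ i * (m.choose i : K) / (x + i) =
      ∑ i ∈ range (m + 2), (-1) ^ i * (m.choose i : K) / (x + i) := by
    simp [sum_range_succ _ (m + 1)]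
  have hshift : ∑ i ∈ range (m + 1), (-1) ^ (i + 1) * (m.choose i : K) / (x + (i + 1)) =
      -∑ i ∈ range (m + 1), (-1) ^ i * (m.choose i : K) / (x + 1 + i) := by
    rw [← sum_neg_distrib]
    refine sum_congr rfl fun i _ => ?_
    ring
  rw [hextend, sum_range_succ', sum_range_succ' _ (m + 1)]
  simp only [choose_succ_succ', cast_add, mul_add, add_div, sum_add_distrib, pow_zero,
    choose_zero_right, cast_zero, cast_one, add_zero, one_mul]
  linear_combination hshift

theorem ascPochhammer_succ_eval_left (n : ℕ) (x : K) :
    (ascPochhammer K (n + 1)).eval x = x * (ascPochhammer K n).eval (x + 1) := by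
  simp [ascPochhammer_succ_left, eval_comp]

theorem sum_range_alternating_choose_div (m : ℕ) {x : K}
    (hx : (ascPochhammer K (m + 1)).eval x ≠ 0) :
    ∑ i ∈ range (m + 1), (-1) ^ i * (m.choose i : K) / (x + i) =
      m ! / (ascPochhammer K (m + 1)).eval x := by
  induction m generalizing x with
  | zero => simp
  | succ m ih =>
    have hright := ascPochhammer_succ_eval (m + 1) x
    have hleft := ascPochhammer_succ_eval_left (m + 1) x
    obtain ⟨hP, hlast⟩ := mul_ne_zero_iff.mp (hright ▸ hx)
    obtain ⟨-, hQ⟩ := mul_ne_zero_iff.mp (hleft ▸ hx)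
    rw [sum_range_succ_alternating_choose_div, ih hP, ih hQ, hright, div_sub_div _ _ hP hQ,
      div_eq_div_iff (mul_ne_zero hP hQ) (mul_ne_zero hP hlast)]
    push_cast [factorial_succ] at hright ⊢
    linear_combination (m ! : K) * (ascPochhammer K (m + 1)).eval x * (hleft.symm.trans hright)

theorem frisch_identity (n : ℕ) (hn : 1 ≤ n) :
    ∑ i ∈ Finset.range (2 * n), (-1 : ℚ) ^ i * ((2 * n - 1).choose i) / (n + i) =
      ((n - 1).factorial : ℚ) * ((2 * n - 1).factorial) / ((3 * n - 1).factorial) := by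
  obtain ⟨k, rfl⟩ := Nat.exists_eq_add_of_le' hn
  have hlen : 2 * (k + 1) = 2 * k + 1 + 1 := by omega
  have hpoch : (k ! : ℚ) * (ascPochhammer ℚ (2 * k + 1 + 1)).eval ((k + 1 : ℕ) : ℚ) =
      (3 * (k + 1) - 1)! := by
    rw [cast_add_one, factorial_mul_ascPochhammer]
    congr 2
    omega
  have hpos : 0 < (ascPochhammer ℚ (2 * k + 1 + 1)).eval ((k + 1 : ℕ) : ℚ) :=
    ascPochhammer_pos _ _ (by positivity)
  simp only [hlen, Nat.add_sub_cancel]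
  rw [sum_range_alternating_choose_div _ hpos.ne', ← hpoch]
  field_simp
end

section
/- Define A_n = ∑_{i=0}^{n} (-1)^i * C(2n-1, i) / (n + i) for n ≥ 1. Then A_1 = 1/2 and for all n ≥ 1, A_{n+1} = (2n(2n+1) / (3(3n+1)(3n+2))) * A_n + (-1)^{n+1} * (28n^3 + 22n^2 - n - 1) / (6n(n+1)(3n+1)(3n+2)) * C(2n, n+1). -/
/-!
Creative telescoping. Write `F n i` for the summand of `A n` and `c n` for the coefficient
`2n(2n+1) / (3(3n+1)(3n+2))`. Zeilberger's algorithm produces a certificate `G`, a hypergeometric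
term in `i`, with `c n * F n i - F (n+1) i = G n (i+1) - G n i`. Summing over `i ≤ n` telescopes,
and `G n 0 = 0`; since `A (n+1)` has one term more than this range, the inhomogeneous term of
the recurrence is `F (n+1) (n+1) - G n (n+1)`.
-/

open Finset

namespace Nat

theorem cast_choose_mul_succ_eq {R : Type*} [CommRing R] (m k : ℕ) :
    (m.choose k : R) * (m + 1) = ((m + 1).choose k : R) * (m + 1 - k) := by
  rcases le_or_gt k (m + 1) with hk | hk
  · have h := congrArg (Nat.cast : ℕ → R) (choose_mul_succ_eq m k)
    push_cast [Nat.cast_sub hk] at h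
    exact h
  · simp [choose_eq_zero_of_lt hk, choose_eq_zero_of_lt (lt_of_succ_lt hk)]

theorem cast_choose_succ_right_eq {R : Type*} [CommRing R] (m k : ℕ) :
    (m.choose (k + 1) : R) * (k + 1) = (m.choose k : R) * (m - k) := by
  rcases le_or_gt k m with hk | hk
  · have h := congrArg (Nat.cast : ℕ → R) (choose_succ_right_eq m k)
    push_cast [Nat.cast_sub hk] at h
    exact h
  · simp [choose_eq_zero_of_lt hk, choose_eq_zero_of_lt (lt_succ_of_lt hk)]

end Nat

def summand (n i : ℕ) : ℚ := (-1) ^ i * ((2 * n - 1).choose i) / (n + i)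

def certificate (n k : ℕ) : ℚ :=
  (-1) ^ k * k * (-(2 * n + 1) * k ^ 2 + (8 * (n : ℚ) ^ 2 + 3 * n + 1) * k
      + 46 * (n : ℚ) ^ 3 + 34 * n ^ 2 + 7 * n)
    * ((2 * n + 1).choose k) / (6 * n * (2 * n + 1) * (3 * n + 1) * (3 * n + 2) * (n + k))

theorem summand_sub_summand_succ {n : ℕ} (hn : 1 ≤ n) (i : ℕ) :
    2 * n * (2 * n + 1) / (3 * (3 * n + 1) * (3 * n + 2)) * summand n i - summand (n + 1) i
      = certificate n (i + 1) - certificate n i := by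
  have hn' : (1 : ℚ) ≤ n := by exact_mod_cast hn
  set c : ℚ := ((2 * n + 1).choose i : ℚ)
  have h₁ : ((2 * n - 1).choose i : ℚ)
      = c * (2 * n + 1 - i) * (2 * n - i) / (2 * n * (2 * n + 1)) := by
    have e₁ := Nat.cast_choose_mul_succ_eq (R := ℚ) (2 * n - 1) i
    have e₂ := Nat.cast_choose_mul_succ_eq (R := ℚ) (2 * n) i
    rw [Nat.sub_add_cancel (by omega), Nat.cast_sub (by omega)] at e₁
    push_cast at e₁ e₂
    rw [eq_div_iff (by positivity)]
    linear_combination (2 * (n : ℚ) + 1) * e₁ + (2 * (n : ℚ) - i) * e₂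
  have h₂ : ((2 * n + 1).choose (i + 1) : ℚ) = c * (2 * n + 1 - i) / (i + 1) := by
    have e := Nat.cast_choose_succ_right_eq (R := ℚ) (2 * n + 1) i
    push_cast at e
    rw [eq_div_iff (by positivity)]
    exact e
  have h₃ : 2 * (n + 1) - 1 = 2 * n + 1 := by omega
  simp only [summand, certificate, h₃, h₁, h₂]
  push_cast
  field_simp
  ring

theorem sum_summand_succ {n : ℕ} (hn : 1 ≤ n) :
    ∑ i ∈ range (n + 1), summand (n + 1) i
      = 2 * n * (2 * n + 1) / (3 * (3 * n + 1) * (3 * n + 2)) * ∑ i ∈ range (n + 1), summand n i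
        - certificate n (n + 1) := by
  have htel := sum_range_sub (certificate n) (n + 1)
  simp only [← summand_sub_summand_succ hn, sum_sub_distrib, ← mul_sum] at htel
  have h₀ : certificate n 0 = 0 := by simp [certificate]
  linarith

theorem summand_succ_sub_certificate {n : ℕ} (hn : 1 ≤ n) :
    summand (n + 1) (n + 1) - certificate n (n + 1)
      = (-1 : ℚ) ^ (n + 1) * (28 * (n : ℚ) ^ 3 + 22 * n ^ 2 - n - 1) /
          (6 * n * (n + 1) * (3 * n + 1) * (3 * n + 2)) * ((2 * n).choose (n + 1)) := by
  have hn' : (1 : ℚ) ≤ n := by exact_mod_cast hn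
  have hc : ((2 * n + 1).choose (n + 1) : ℚ) = ((2 * n).choose (n + 1)) * (2 * n + 1) / n := by
    have h := Nat.cast_choose_mul_succ_eq (R := ℚ) (2 * n) (n + 1)
    push_cast at h
    field_simp
    linear_combination -h
  have h₃ : 2 * (n + 1) - 1 = 2 * n + 1 := by omega
  simp only [summand, certificate, h₃, hc]
  push_cast
  field_simp
  ring

theorem A_recurrence
    (A : ℕ → ℚ)
    (hA : ∀ n : ℕ, 1 ≤ n →
      A n = ∑ i ∈ Finset.range (n + 1), (-1 : ℚ) ^ i * ((2 * n - 1).choose i) / (n + i)) :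
    A 1 = 1 / 2 ∧
    ∀ n : ℕ, 1 ≤ n →
      A (n + 1) = (2 * n * (2 * n + 1) / (3 * (3 * n + 1) * (3 * n + 2))) * A n +
        (-1 : ℚ) ^ (n + 1) * (28 * (n : ℚ) ^ 3 + 22 * n ^ 2 - n - 1) /
          (6 * n * (n + 1) * (3 * n + 1) * (3 * n + 2)) * ((2 * n).choose (n + 1)) := by
  refine ⟨by norm_num [hA 1 le_rfl, sum_range_succ], fun n hn => ?_⟩
  have hA' : ∀ m, 1 ≤ m → A m = ∑ i ∈ range (m + 1), summand m i := hA
  rw [hA' (n + 1) (by omega), sum_range_succ, sum_summand_succ hn, hA' n hn,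
    ← summand_succ_sub_certificate hn]
  ring
end

section
/- For n ≥ 2, define the polynomial identity: the iterated integral J_n(a, b) = ∫ over the region 0 < t_1 < t_2 < ... < t_{2n-2} < a, with additional constraint t_{2n-2} < b in the final factor, of t_1 * ∏_{i=2}^{n} (t_{2i-1} - t_{2i-3})(t_{2i} - t_{2i-2}) (with t_{2n-1} = a, t_{2n} = b) equals (a^{4n-4}/(4n-3)!) * ((4n-3) P_{2n-2} b - ((4n-4) P_{2n-2} - P_{2n-3}) a), where P_k are the Pell numbers. Formally: if F_2(a,b) = ∫_0^a ∫_0^{t_2, t_1<t_2} t_1 (a - t_1)(b - t_2) dt_1 dt_2 and F_{n+1}(a, b) = ∫∫_{0 < x < y < a} F_n(x, y) (a - x)(b - y) dx dy, then F_n(a, b) = (a^{4n-4}/(4n-3)!) * ((4n-3) P_{2n-2} b - ((4n-4) P_{2n-2} - P_{2n-3}) a) for all n ≥ 2 and real 0 < a < b. -/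
open intervalIntegral MeasureTheory

lemma int_three (m : ℕ) (α β γ y : ℝ) :
    (∫ x in (0:ℝ)..y, (α*x^m + β*x^(m+1) + γ*x^(m+2))) =
      α*y^(m+1)/(m+1) + β*y^(m+2)/(m+2) + γ*y^(m+3)/(m+3) := by
  have h1 : IntervalIntegrable (fun x : ℝ => α*x^m) volume 0 y :=
    ((continuous_const.mul (continuous_pow m))).intervalIntegrable _ _
  have h2 : IntervalIntegrable (fun x : ℝ => β*x^(m+1)) volume 0 y :=
    ((continuous_const.mul (continuous_pow (m+1)))).intervalIntegrable _ _
  have h3 : IntervalIntegrable (fun x : ℝ => γ*x^(m+2)) volume 0 y :=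
    ((continuous_const.mul (continuous_pow (m+2)))).intervalIntegrable _ _
  rw [intervalIntegral.integral_add (h1.add h2) h3, intervalIntegral.integral_add h1 h2,
    intervalIntegral.integral_const_mul, intervalIntegral.integral_const_mul,
    intervalIntegral.integral_const_mul, integral_pow, integral_pow, integral_pow]
  simp only [zero_pow, Nat.succ_ne_zero, ne_eq, Nat.add_eq_zero, and_false, not_false_eq_true,
    sub_zero, one_ne_zero, false_and]
  push_cast
  ring

lemma inner_congr {f g : ℝ → ℝ} {y : ℝ} (hy : 0 < y)
    (h : ∀ x ∈ Set.Ioo (0:ℝ) y, f x = g x) :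
    (∫ x in (0:ℝ)..y, f x) = ∫ x in (0:ℝ)..y, g x := by
  apply intervalIntegral.integral_congr_ae
  have hne : ∀ᵐ x : ℝ ∂volume, x ≠ y := by
    refine MeasureTheory.ae_iff.mpr ?_
    simp
  filter_upwards [hne] with x hx hmem
  rw [Set.uIoc_of_le hy.le] at hmem
  exact h x ⟨hmem.1, lt_of_le_of_ne hmem.2 hx⟩

set_option maxHeartbeats 2000000 in
theorem Fn_closed_form
    (P : ℕ → ℤ) (hP0 : P 0 = 0) (hP1 : P 1 = 1)
    (hP : ∀ k : ℕ, 2 ≤ k → P k = 2 * P (k - 1) + P (k - 2))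
    (F : ℕ → ℝ → ℝ → ℝ)
    (hF2 : ∀ a b : ℝ, F 2 a b =
      ∫ t₂ in (0:ℝ)..a, ∫ t₁ in (0:ℝ)..t₂, t₁ * (a - t₁) * (b - t₂))
    (hFsucc : ∀ n : ℕ, 2 ≤ n → ∀ a b : ℝ, F (n + 1) a b =
      ∫ y in (0:ℝ)..a, ∫ x in (0:ℝ)..y, F n x y * (a - x) * (b - y)) :
    ∀ n : ℕ, 2 ≤ n → ∀ a b : ℝ, 0 < a → a < b →
      F n a b = a ^ (4 * n - 4) / ((4 * n - 3).factorial : ℝ) *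
        ((4 * (n : ℝ) - 3) * (P (2 * n - 2) : ℝ) * b -
          ((4 * (n : ℝ) - 4) * (P (2 * n - 2) : ℝ) - (P (2 * n - 3) : ℝ)) * a) := by
  intro n hn
  induction n, hn using Nat.le_induction with
  | base =>
    intro a b ha hab
    have hP2 : P 2 = 2 := by rw [hP 2 le_rfl]; norm_num [hP0, hP1]
    rw [hF2]
    have hin : ∀ t₂ : ℝ, (fun t₁ : ℝ => t₁ * (a - t₁) * (b - t₂)) =
        (fun x : ℝ => (0:ℝ)*x^0 + (a*(b-t₂))*x^(0+1) + (-(b-t₂))*x^(0+2)) := by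
      intro t₂; funext x; ring
    have h2 : (fun t₂ : ℝ => ∫ t₁ in (0:ℝ)..t₂, t₁ * (a - t₁) * (b - t₂)) =
        (fun t₂ : ℝ => (a*b/2)*t₂^2 + (-(a/2) - b/3)*t₂^(2+1) + (1/3)*t₂^(2+2)) := by
      funext t₂
      rw [hin t₂, int_three]
      push_cast
      ring
    rw [h2, int_three, hP2]
    norm_num [Nat.factorial, hP1]
    ring
  | succ m hm ih =>
    obtain ⟨k, rfl⟩ : ∃ k, m = k + 2 := ⟨m - 2, by omega⟩
    intro a b ha hab
    set K : ℝ := ((4*k+5).factorial : ℝ) with hKdef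
    have hKpos : (0:ℝ) < K := by positivity
    set p : ℝ := (P (2*k+2) : ℝ) with hpdef
    set q : ℝ := (P (2*k+1) : ℝ) with hqdef
    set c : ℝ := (4*(k:ℝ)+5)*p with hcdef
    set d : ℝ := (4*(k:ℝ)+4)*p - q with hddef
    have hp3 : (P (2*k+3) : ℝ) = 2*p + q := by
      have h := hP (2*k+3) (by omega)
      rw [show 2*k+3-1 = 2*k+2 from by omega, show 2*k+3-2 = 2*k+1 from by omega] at h
      rw [hpdef, hqdef]; exact_mod_cast h
    have hp4 : (P (2*k+4) : ℝ) = 5*p + 2*q := by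
      have h := hP (2*k+4) (by omega)
      rw [show 2*k+4-1 = 2*k+3 from by omega, show 2*k+4-2 = 2*k+2 from by omega] at h
      have : (P (2*k+4) : ℝ) = 2*(P (2*k+3):ℝ) + p := by rw [hpdef]; exact_mod_cast h
      rw [this, hp3]; ring
    have IH' : ∀ x y : ℝ, 0 < x → x < y →
        F (k+2) x y = x^(4*k+4)/K * (c*y - d*x) := by
      intro x y hx hxy
      have h := ih x y hx hxy
      rw [show 4*(k+2)-4 = 4*k+4 from by omega, show 4*(k+2)-3 = 4*k+5 from by omega,
        show 2*(k+2)-2 = 2*k+2 from by omega, show 2*(k+2)-3 = 2*k+1 from by omega] at h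
      rw [h, hcdef, hddef, hpdef, hqdef]
      push_cast
      ring
    rw [hFsucc (k+2) (by omega) a b]
    have stageA : (∫ y in (0:ℝ)..a, ∫ x in (0:ℝ)..y, F (k+2) x y * (a - x) * (b - y))
        = ∫ y in (0:ℝ)..a, ∫ x in (0:ℝ)..y,
            (x^(4*k+4)/K * (c*y - d*x)) * (a - x) * (b - y) := by
      apply intervalIntegral.integral_congr
      intro y hy
      rw [Set.uIcc_of_le ha.le] at hy
      rcases eq_or_lt_of_le hy.1 with h0 | h0
      · simp [← h0]
      · exact inner_congr h0 (fun x hx => by rw [IH' x y hx.1 hx.2])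
    rw [stageA]
    have hin : ∀ y : ℝ, (fun x : ℝ => (x^(4*k+4)/K * (c*y - d*x)) * (a - x) * (b - y)) =
        (fun x : ℝ => (c*a*y*(b-y)/K)*x^(4*k+4) + (-(c*y+d*a)*(b-y)/K)*x^(4*k+4+1)
          + (d*(b-y)/K)*x^(4*k+4+2)) := by
      intro y; funext x; ring
    have hB : (fun y : ℝ => ∫ x in (0:ℝ)..y,
          (x^(4*k+4)/K * (c*y - d*x)) * (a - x) * (b - y)) =
        (fun y : ℝ =>
          (c*a*b/((4*(k:ℝ)+5)*K) - d*a*b/((4*(k:ℝ)+6)*K))*y^(4*k+6)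
          + (-(c*a)/((4*(k:ℝ)+5)*K) - c*b/((4*(k:ℝ)+6)*K) + d*a/((4*(k:ℝ)+6)*K)
              + d*b/((4*(k:ℝ)+7)*K))*y^(4*k+6+1)
          + (c/((4*(k:ℝ)+6)*K) - d/((4*(k:ℝ)+7)*K))*y^(4*k+6+2)) := by
      funext y
      rw [hin y, int_three]
      have h5 : (4*(k:ℝ)+5) ≠ 0 := by positivity
      have h6 : (4*(k:ℝ)+6) ≠ 0 := by positivity
      have h7 : (4*(k:ℝ)+7) ≠ 0 := by positivity
      push_cast
      field_simp
      ring
    rw [hB, int_three]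
    rw [show 4*(k+2+1)-4 = 4*k+8 from by omega, show 4*(k+2+1)-3 = 4*k+9 from by omega,
      show 2*(k+2+1)-2 = 2*k+4 from by omega, show 2*(k+2+1)-3 = 2*k+3 from by omega,
      hp4, hp3]
    have hfac : ((4*k+9).factorial : ℝ)
        = (4*(k:ℝ)+9)*((4*(k:ℝ)+8)*((4*(k:ℝ)+7)*((4*(k:ℝ)+6)*K))) := by
      rw [hKdef]
      rw [show 4*k+9 = (4*k+8)+1 from by omega, Nat.factorial_succ,
        show 4*k+8 = (4*k+7)+1 from by omega, Nat.factorial_succ,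
        show 4*k+7 = (4*k+6)+1 from by omega, Nat.factorial_succ,
        show 4*k+6 = (4*k+5)+1 from by omega, Nat.factorial_succ]
      push_cast
      ring
    rw [hfac]
    have h5 : (4*(k:ℝ)+5) ≠ 0 := by positivity
    have h6 : (4*(k:ℝ)+6) ≠ 0 := by positivity
    have h7 : (4*(k:ℝ)+7) ≠ 0 := by positivity
    have h8 : (4*(k:ℝ)+8) ≠ 0 := by positivity
    have h9 : (4*(k:ℝ)+9) ≠ 0 := by positivity
    have hK : K ≠ 0 := ne_of_gt hKpos
    push_cast
    field_simp
    ring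
end

section
/- With C_1, C_2, C_3, C_4 as in the coupled recurrence system (initial values C_1(2)=0, C_2(2)=-1, C_3(2)=0, C_4(2)=-2 and the recurrences given), define g_n = (5n-2)C_1(n+1) - C_2(n+1) for n ≥ 1 (with the recurrences extended appropriately so g_1 = 1, g_2 = 14, g_3 = 290). Then for all n ≥ 4, g_n = 24g_{n-1} - 40g_{n-2} - 8g_{n-3}. -/
theorem g_n5_recurrence
    (C₁ C₂ C₃ C₄ : ℕ → ℤ)
    (h1 : C₁ 2 = 0) (h2 : C₂ 2 = -1) (h3 : C₃ 2 = 0) (h4 : C₄ 2 = -2)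
    (hC1 : ∀ n : ℕ, 2 ≤ n → C₁ (n + 1) =
      10 * ((n : ℤ) - 1) * (5 * n - 7) * C₁ n - (10 * n - 11) * C₂ n -
        (10 * n - 11) * C₃ n + 2 * C₄ n)
    (hC2 : ∀ n : ℕ, 2 ≤ n → C₂ (n + 1) =
      (5 * (n : ℤ) - 4) * (5 * n - 7) * (10 * n - 11) * C₁ n -
        2 * (5 * n - 4) * (5 * n - 6) * C₂ n - 50 * ((n : ℤ) - 1) ^ 2 * C₃ n +
        (10 * n - 9) * C₄ n)
    (hC3 : ∀ n : ℕ, 2 ≤ n → C₃ (n + 1) =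
      (5 * (n : ℤ) - 4) * (5 * n - 7) * (10 * n - 11) * C₁ n -
        50 * ((n : ℤ) - 1) ^ 2 * C₂ n - 2 * (5 * n - 4) * (5 * n - 6) * C₃ n +
        (10 * n - 9) * C₄ n)
    (hC4 : ∀ n : ℕ, 2 ≤ n → C₄ (n + 1) =
      2 * (5 * (n : ℤ) - 3) * (5 * n - 4) * (5 * n - 6) * (5 * n - 7) * C₁ n -
        (5 * n - 3) * (5 * n - 6) * (10 * n - 9) * C₂ n -
        (5 * n - 3) * (5 * n - 6) * (10 * n - 9) * C₃ n +
        10 * ((n : ℤ) - 1) * (5 * n - 3) * C₄ n)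
    (g : ℕ → ℤ)
    (hg : ∀ n : ℕ, 1 ≤ n → g n = (5 * (n : ℤ) - 2) * C₁ (n + 1) - C₂ (n + 1))
    (hg1 : g 1 = 1) (hg2 : g 2 = 14) (hg3 : g 3 = 290) :
    ∀ n : ℕ, 4 ≤ n → g n = 24 * g (n - 1) - 40 * g (n - 2) - 8 * g (n - 3) := by
  -- antisymmetric part doubles each step
  have hD : ∀ m : ℕ, C₂ (m + 2) - C₃ (m + 2) = -(2 ^ m) := by
    intro m
    induction m with
    | zero => rw [h2, h3]; norm_num
    | succ k ih =>
      have e2 : C₂ (k + 3) =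
          (5 * ((k + 2 : ℕ) : ℤ) - 4) * (5 * ((k + 2 : ℕ) : ℤ) - 7) *
              (10 * ((k + 2 : ℕ) : ℤ) - 11) * C₁ (k + 2) -
            2 * (5 * ((k + 2 : ℕ) : ℤ) - 4) * (5 * ((k + 2 : ℕ) : ℤ) - 6) * C₂ (k + 2) -
            50 * (((k + 2 : ℕ) : ℤ) - 1) ^ 2 * C₃ (k + 2) +
            (10 * ((k + 2 : ℕ) : ℤ) - 9) * C₄ (k + 2) := hC2 (k + 2) (by omega)
      have e3 : C₃ (k + 3) =
          (5 * ((k + 2 : ℕ) : ℤ) - 4) * (5 * ((k + 2 : ℕ) : ℤ) - 7) *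
              (10 * ((k + 2 : ℕ) : ℤ) - 11) * C₁ (k + 2) -
            50 * (((k + 2 : ℕ) : ℤ) - 1) ^ 2 * C₂ (k + 2) -
            2 * (5 * ((k + 2 : ℕ) : ℤ) - 4) * (5 * ((k + 2 : ℕ) : ℤ) - 6) * C₃ (k + 2) +
            (10 * ((k + 2 : ℕ) : ℤ) - 9) * C₄ (k + 2) := hC3 (k + 2) (by omega)
      show C₂ (k + 3) - C₃ (k + 3) = -(2 ^ (k + 1))
      rw [e2, e3]
      push_cast
      linear_combination 2 * ih
  -- the key inhomogeneous 2nd-order recurrence for g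
  have key : ∀ m : ℕ, g (m + 3) = 22 * g (m + 2) + 4 * g (m + 1) - 22 * 2 ^ m := by
    intro m
    have hga : g (m + 3) = (5 * ((m + 3 : ℕ) : ℤ) - 2) * C₁ (m + 4) - C₂ (m + 4) :=
      hg (m + 3) (by omega)
    have hgb : g (m + 2) = (5 * ((m + 2 : ℕ) : ℤ) - 2) * C₁ (m + 3) - C₂ (m + 3) :=
      hg (m + 2) (by omega)
    have hgc : g (m + 1) = (5 * ((m + 1 : ℕ) : ℤ) - 2) * C₁ (m + 2) - C₂ (m + 2) :=
      hg (m + 1) (by omega)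
    have e1 : C₁ (m + 4) =
        10 * (((m + 3 : ℕ) : ℤ) - 1) * (5 * ((m + 3 : ℕ) : ℤ) - 7) * C₁ (m + 3) -
          (10 * ((m + 3 : ℕ) : ℤ) - 11) * C₂ (m + 3) -
          (10 * ((m + 3 : ℕ) : ℤ) - 11) * C₃ (m + 3) + 2 * C₄ (m + 3) := hC1 (m + 3) (by omega)
    have e2 : C₂ (m + 4) =
        (5 * ((m + 3 : ℕ) : ℤ) - 4) * (5 * ((m + 3 : ℕ) : ℤ) - 7) *
            (10 * ((m + 3 : ℕ) : ℤ) - 11) * C₁ (m + 3) -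
          2 * (5 * ((m + 3 : ℕ) : ℤ) - 4) * (5 * ((m + 3 : ℕ) : ℤ) - 6) * C₂ (m + 3) -
          50 * (((m + 3 : ℕ) : ℤ) - 1) ^ 2 * C₃ (m + 3) +
          (10 * ((m + 3 : ℕ) : ℤ) - 9) * C₄ (m + 3) := hC2 (m + 3) (by omega)
    have f1 : C₁ (m + 3) =
        10 * (((m + 2 : ℕ) : ℤ) - 1) * (5 * ((m + 2 : ℕ) : ℤ) - 7) * C₁ (m + 2) -
          (10 * ((m + 2 : ℕ) : ℤ) - 11) * C₂ (m + 2) -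
          (10 * ((m + 2 : ℕ) : ℤ) - 11) * C₃ (m + 2) + 2 * C₄ (m + 2) := hC1 (m + 2) (by omega)
    have f2 : C₂ (m + 3) =
        (5 * ((m + 2 : ℕ) : ℤ) - 4) * (5 * ((m + 2 : ℕ) : ℤ) - 7) *
            (10 * ((m + 2 : ℕ) : ℤ) - 11) * C₁ (m + 2) -
          2 * (5 * ((m + 2 : ℕ) : ℤ) - 4) * (5 * ((m + 2 : ℕ) : ℤ) - 6) * C₂ (m + 2) -
          50 * (((m + 2 : ℕ) : ℤ) - 1) ^ 2 * C₃ (m + 2) +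
          (10 * ((m + 2 : ℕ) : ℤ) - 9) * C₄ (m + 2) := hC2 (m + 2) (by omega)
    have f3 : C₃ (m + 3) =
        (5 * ((m + 2 : ℕ) : ℤ) - 4) * (5 * ((m + 2 : ℕ) : ℤ) - 7) *
            (10 * ((m + 2 : ℕ) : ℤ) - 11) * C₁ (m + 2) -
          50 * (((m + 2 : ℕ) : ℤ) - 1) ^ 2 * C₂ (m + 2) -
          2 * (5 * ((m + 2 : ℕ) : ℤ) - 4) * (5 * ((m + 2 : ℕ) : ℤ) - 6) * C₃ (m + 2) +
          (10 * ((m + 2 : ℕ) : ℤ) - 9) * C₄ (m + 2) := hC3 (m + 2) (by omega)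
    have f4 : C₄ (m + 3) =
        2 * (5 * ((m + 2 : ℕ) : ℤ) - 3) * (5 * ((m + 2 : ℕ) : ℤ) - 4) *
            (5 * ((m + 2 : ℕ) : ℤ) - 6) * (5 * ((m + 2 : ℕ) : ℤ) - 7) * C₁ (m + 2) -
          (5 * ((m + 2 : ℕ) : ℤ) - 3) * (5 * ((m + 2 : ℕ) : ℤ) - 6) *
            (10 * ((m + 2 : ℕ) : ℤ) - 9) * C₂ (m + 2) -
          (5 * ((m + 2 : ℕ) : ℤ) - 3) * (5 * ((m + 2 : ℕ) : ℤ) - 6) *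
            (10 * ((m + 2 : ℕ) : ℤ) - 9) * C₃ (m + 2) +
          10 * (((m + 2 : ℕ) : ℤ) - 1) * (5 * ((m + 2 : ℕ) : ℤ) - 3) * C₄ (m + 2) :=
      hC4 (m + 2) (by omega)
    have hDm : C₂ (m + 2) - C₃ (m + 2) = -(2 ^ m) := hD m
    rw [hga, hgb, hgc, e1, e2, f1, f2, f3, f4]
    push_cast
    linear_combination (22 : ℤ) * hDm
  intro n hn
  obtain ⟨m, rfl⟩ : ∃ m, n = m + 4 := ⟨n - 4, by omega⟩
  have ha : g (m + 4) = 22 * g (m + 3) + 4 * g (m + 2) - 22 * 2 ^ (m + 1) := key (m + 1)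
  have hb : g (m + 3) = 22 * g (m + 2) + 4 * g (m + 1) - 22 * 2 ^ m := key m
  have s1 : m + 4 - 1 = m + 3 := by omega
  have s2 : m + 4 - 2 = m + 2 := by omega
  have s3 : m + 4 - 3 = m + 1 := by omega
  rw [s1, s2, s3]
  linear_combination ha - 2 * hb
end

section
/- With C_1, C_2, C_3, C_4 defined by the coupled recurrences with initial values C_1(2)=0, C_2(2)=-1, C_3(2)=0, C_4(2)=-2, and g_n = (5n-2)C_1(n+1) - C_2(n+1), the identity g_n = (5n-7)(25n-24)C_1(n) - (25n-26)C_2(n) - (25n-28)C_3(n) + 5C_4(n) holds for all n ≥ 2. -/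
theorem g_n5_alternate_form
    (C₁ C₂ C₃ C₄ : ℕ → ℤ)
    (h1 : C₁ 2 = 0) (h2 : C₂ 2 = -1) (h3 : C₃ 2 = 0) (h4 : C₄ 2 = -2)
    (hC1 : ∀ n : ℕ, 2 ≤ n → C₁ (n + 1) =
      10 * ((n : ℤ) - 1) * (5 * n - 7) * C₁ n - (10 * n - 11) * C₂ n -
        (10 * n - 11) * C₃ n + 2 * C₄ n)
    (hC2 : ∀ n : ℕ, 2 ≤ n → C₂ (n + 1) =
      (5 * (n : ℤ) - 4) * (5 * n - 7) * (10 * n - 11) * C₁ n -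
        2 * (5 * n - 4) * (5 * n - 6) * C₂ n - 50 * ((n : ℤ) - 1) ^ 2 * C₃ n +
        (10 * n - 9) * C₄ n)
    (hC3 : ∀ n : ℕ, 2 ≤ n → C₃ (n + 1) =
      (5 * (n : ℤ) - 4) * (5 * n - 7) * (10 * n - 11) * C₁ n -
        50 * ((n : ℤ) - 1) ^ 2 * C₂ n - 2 * (5 * n - 4) * (5 * n - 6) * C₃ n +
        (10 * n - 9) * C₄ n)
    (hC4 : ∀ n : ℕ, 2 ≤ n → C₄ (n + 1) =
      2 * (5 * (n : ℤ) - 3) * (5 * n - 4) * (5 * n - 6) * (5 * n - 7) * C₁ n -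
        (5 * n - 3) * (5 * n - 6) * (10 * n - 9) * C₂ n -
        (5 * n - 3) * (5 * n - 6) * (10 * n - 9) * C₃ n +
        10 * ((n : ℤ) - 1) * (5 * n - 3) * C₄ n)
    (g : ℕ → ℤ)
    (hg : ∀ n : ℕ, 1 ≤ n → g n = (5 * (n : ℤ) - 2) * C₁ (n + 1) - C₂ (n + 1)) :
    ∀ n : ℕ, 2 ≤ n → g n =
      (5 * (n : ℤ) - 7) * (25 * n - 24) * C₁ n - (25 * n - 26) * C₂ n -
        (25 * n - 28) * C₃ n + 5 * C₄ n := by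
  intro n hn
  rw [hg n (le_trans one_le_two hn), hC1 n hn, hC2 n hn]
  ring
end

section
/- For all n ≥ 1 and real numbers 0 < t_1 < t_2 < t_3 < 1, the function G_n(t_1,t_2,t_3) = t_1^n t_2^n t_3^n/(n!)^3 + (2/(n!(2n)!)) ∑_{i=0}^{n-1} (-1)^{n-i} C(2n,i) [t_1^n t_2^{2n-i} t_3^i - t_1^{2n-i} t_2^n t_3^i + t_1^{2n-i} t_2^i t_3^n] satisfies the integral recurrence G_{n+1}(t_1,t_2,t_3) = ∫∫∫_{0<x<t_1, t_1<y<t_2, t_2<z<t_3} G_n(x,y,z) dx dy dz. -/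
noncomputable def G (n : ℕ) (t₁ t₂ t₃ : ℝ) : ℝ :=
  t₁ ^ n * t₂ ^ n * t₃ ^ n / ((n.factorial : ℝ)) ^ 3 +
    2 / ((n.factorial : ℝ) * ((2 * n).factorial : ℝ)) *
      ∑ i ∈ Finset.range n, (-1 : ℝ) ^ (n - i) * ((2 * n).choose i) *
        (t₁ ^ n * t₂ ^ (2 * n - i) * t₃ ^ i - t₁ ^ (2 * n - i) * t₂ ^ n * t₃ ^ i +
          t₁ ^ (2 * n - i) * t₂ ^ i * t₃ ^ n)

/-!
`G n` is a fixed linear combination of monomials `x ^ a * y ^ b * z ^ c`, and the box integral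
replaces each monomial by the product of its three one-variable integrals. Expanding these
products, the cross terms cancel and the `i`-th bracket of `G n` becomes the `(i + 1)`-st bracket
of `G (n + 1)` minus the `0`-th one, the coefficients matching because
`C(2n, i) / ((2n - i + 1)(i + 1))` is proportional to `C(2n + 2, i + 1)`. The diagonal term
produces the same defect, and all these multiples of the `0`-th bracket cancel since the
alternating sum of `C(2N, j)` over `j < N` is `-C(2N, N) / 2`.
-/

open Finset intervalIntegral
open MeasureTheory (volume)
open scoped Nat

def gBracket (M : ℕ → ℕ → ℕ → ℝ) (n i : ℕ) : ℝ :=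
  M n (2 * n - i) i - M (2 * n - i) n i + M (2 * n - i) i n

/-- `gForm M n` is `G n` with each monomial `t₁ ^ a * t₂ ^ b * t₃ ^ c` replaced by `M a b c`. -/
noncomputable def gForm (M : ℕ → ℕ → ℕ → ℝ) (n : ℕ) : ℝ :=
  M n n n / (n ! : ℝ) ^ 3 +
    2 / ((n ! : ℝ) * (2 * n)!) *
      ∑ i ∈ range n, (-1 : ℝ) ^ (n - i) * (2 * n).choose i * gBracket M n i

def monomial₃ (t₁ t₂ t₃ : ℝ) (a b c : ℕ) : ℝ := t₁ ^ a * t₂ ^ b * t₃ ^ c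

noncomputable def boxMonomial (t₁ t₂ t₃ : ℝ) (a b c : ℕ) : ℝ :=
  t₁ ^ (a + 1) / (a + 1) * ((t₂ ^ (b + 1) - t₁ ^ (b + 1)) / (b + 1)) *
    ((t₃ ^ (c + 1) - t₂ ^ (c + 1)) / (c + 1))

theorem G_eq_gForm (n : ℕ) (t₁ t₂ t₃ : ℝ) : G n t₁ t₂ t₃ = gForm (monomial₃ t₁ t₂ t₃) n := rfl

theorem integral_gForm {u v : ℝ} {M : ℝ → ℕ → ℕ → ℕ → ℝ}
    (hM : ∀ a b c, IntervalIntegrable (fun x => M x a b c) volume u v) (n : ℕ) :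
    ∫ x in u..v, gForm (M x) n = gForm (fun a b c => ∫ x in u..v, M x a b c) n := by
  have hT (i : ℕ) : IntervalIntegrable (fun x => gBracket (M x) n i) volume u v :=
    ((hM _ _ _).sub (hM _ _ _)).add (hM _ _ _)
  unfold gForm
  have hS : IntervalIntegrable
      (fun x => ∑ i ∈ range n, (-1 : ℝ) ^ (n - i) * (2 * n).choose i * gBracket (M x) n i)
      volume u v := by
    simpa only [Finset.sum_fn] using IntervalIntegrable.sum _ fun i _ => (hT i).const_mul _
  rw [integral_add ((hM n n n).div_const _) (hS.const_mul _),
    integral_div, integral_const_mul, integral_finsetSum fun i _ => (hT i).const_mul _]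
  congr 2
  refine sum_congr rfl fun i _ => ?_
  rw [integral_const_mul]
  unfold gBracket
  rw [integral_add ((hM _ _ _).sub (hM _ _ _)) (hM _ _ _),
    integral_sub (hM _ _ _) (hM _ _ _)]

theorem integral_box_gForm_monomial₃ (n : ℕ) (t₁ t₂ t₃ : ℝ) :
    ∫ z in t₂..t₃, ∫ y in t₁..t₂, ∫ x in (0:ℝ)..t₁, gForm (monomial₃ x y z) n =
      gForm (boxMonomial t₁ t₂ t₃) n := by
  unfold monomial₃
  simp (disch := intros; apply Continuous.intervalIntegrable; fun_prop) only
    [integral_gForm, integral_mul_const, integral_const_mul, integral_pow]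
  simp only [ne_eq, add_eq_zero, one_ne_zero, and_false, not_false_eq_true, zero_pow, sub_zero]
  rfl

theorem gBracket_boxMonomial {n i : ℕ} (hi : i ≤ 2 * n) (t₁ t₂ t₃ : ℝ) :
    gBracket (boxMonomial t₁ t₂ t₃) n i * ((n + 1) * (((2 * n - i : ℕ) : ℝ) + 1) * (i + 1)) =
      gBracket (monomial₃ t₁ t₂ t₃) (n + 1) (i + 1) - gBracket (monomial₃ t₁ t₂ t₃) (n + 1) 0 := by
  obtain ⟨m, hm⟩ := Nat.exists_eq_add_of_le hi
  have h₁ : 2 * n - i = m := by omega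
  have h₂ : 2 * (n + 1) - (i + 1) = m + 1 := by omega
  have h₃ : 2 * (n + 1) - 0 = (m + 1) + (i + 1) := by omega
  simp only [gBracket, boxMonomial, monomial₃, h₁, h₂, h₃]
  field_simp
  ring

theorem boxMonomial_diag (n : ℕ) (t₁ t₂ t₃ : ℝ) :
    boxMonomial t₁ t₂ t₃ n n n * (n + 1) ^ 3 =
      monomial₃ t₁ t₂ t₃ (n + 1) (n + 1) (n + 1) - gBracket (monomial₃ t₁ t₂ t₃) (n + 1) 0 := by
  have h := gBracket_boxMonomial (n := n) (i := n) (by omega) t₁ t₂ t₃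
  simp only [gBracket, show 2 * n - n = n by omega,
    show 2 * (n + 1) - (n + 1) = n + 1 by omega] at h ⊢
  linear_combination h

theorem choose_two_mul_div_eq (n i : ℕ) (hi : i ≤ 2 * n) :
    2 / ((n ! : ℝ) * (2 * n)!) * (2 * n).choose i =
      2 / (((n + 1)! : ℝ) * (2 * (n + 1))!) * (2 * (n + 1)).choose (i + 1) *
        ((n + 1) * (((2 * n - i : ℕ) : ℝ) + 1) * (i + 1)) := by
  rw [Nat.cast_choose ℝ hi, Nat.cast_choose ℝ (by omega : i + 1 ≤ 2 * (n + 1)),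
    show 2 * (n + 1) - (i + 1) = (2 * n - i) + 1 by omega, show 2 * (n + 1) = 2 * n + 1 + 1 by ring,
    Nat.factorial_succ (2 * n - i), Nat.factorial_succ (2 * n + 1), Nat.factorial_succ (2 * n),
    Nat.factorial_succ i, Nat.factorial_succ n]
  generalize 2 * n - i = k
  push_cast
  field_simp

theorem sum_range_neg_one_pow_mul_choose (n : ℕ) :
    ∑ j ∈ range (n + 1), (-1 : ℝ) ^ (n + 1 - j) * (2 * (n + 1)).choose j =
      -((2 * (n + 1)).choose (n + 1) : ℝ) / 2 := by
  have h := Int.alternating_sum_range_choose_eq_choose (n := 2 * n + 1) (m := n)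
  have hsign (j : ℕ) (hj : j ≤ n + 1) : (-1 : ℝ) ^ (n + 1 - j) = (-1) ^ (n + 1) * (-1) ^ j := by
    rw [pow_sub₀ _ (by norm_num) hj, ← inv_pow, inv_neg, inv_one]
  calc ∑ j ∈ range (n + 1), (-1 : ℝ) ^ (n + 1 - j) * (2 * (n + 1)).choose j
      = (-1) ^ (n + 1) * ∑ j ∈ range (n + 1), (-1 : ℝ) ^ j * (2 * n + 1 + 1).choose j := by
        rw [mul_sum]
        refine sum_congr rfl fun j hj => ?_
        rw [hsign j (by rw [mem_range] at hj; omega), show 2 * (n + 1) = 2 * n + 1 + 1 by ring,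
          mul_assoc]
    _ = (-1) ^ (n + 1) * ((-1) ^ n * (2 * n + 1).choose n) := by exact_mod_cast congrArg (_ * ·) h
    _ = -((2 * (n + 1)).choose (n + 1) : ℝ) / 2 := by
        rw [show 2 * (n + 1) = 2 * n + 1 + 1 by ring, Nat.choose_succ_succ, Nat.choose_symm_half,
          ← mul_assoc, ← pow_add, Odd.neg_one_pow ⟨n, by ring⟩]
        push_cast
        ring

theorem inv_factorial_cube_add_sum_eq_zero (n : ℕ) :
    1 / ((n + 1)! : ℝ) ^ 3 + 2 / (((n + 1)! : ℝ) * (2 * (n + 1))!) *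
      ∑ j ∈ range (n + 1), (-1 : ℝ) ^ (n + 1 - j) * (2 * (n + 1)).choose j = 0 := by
  rw [sum_range_neg_one_pow_mul_choose, Nat.cast_choose ℝ (by omega : n + 1 ≤ 2 * (n + 1)),
    show 2 * (n + 1) - (n + 1) = n + 1 by omega]
  field_simp
  ring

theorem gForm_boxMonomial (n : ℕ) (t₁ t₂ t₃ : ℝ) :
    gForm (boxMonomial t₁ t₂ t₃) n = G (n + 1) t₁ t₂ t₃ := by
  set T := gBracket (monomial₃ t₁ t₂ t₃) (n + 1)
  set c : ℝ := 2 / (((n + 1)! : ℝ) * (2 * (n + 1))!)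
  set a : ℕ → ℝ := fun j => (-1 : ℝ) ^ (n + 1 - j) * (2 * (n + 1)).choose j
  have hmain : boxMonomial t₁ t₂ t₃ n n n / (n ! : ℝ) ^ 3 =
      (monomial₃ t₁ t₂ t₃ (n + 1) (n + 1) (n + 1) - T 0) / ((n + 1)! : ℝ) ^ 3 := by
    rw [← boxMonomial_diag, Nat.factorial_succ]
    push_cast
    field_simp
  have hsum : 2 / ((n ! : ℝ) * (2 * n)!) *
      ∑ i ∈ range n, (-1 : ℝ) ^ (n - i) * (2 * n).choose i * gBracket (boxMonomial t₁ t₂ t₃) n i =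
      c * ∑ j ∈ range (n + 1), a j * (T j - T 0) := by
    rw [sum_range_succ', sub_self, mul_zero, add_zero, mul_sum, mul_sum]
    refine sum_congr rfl fun i hi => ?_
    have hi' : i ≤ 2 * n := by rw [mem_range] at hi; omega
    rw [← gBracket_boxMonomial hi']
    simp only [a, c, Nat.add_sub_add_right]
    linear_combination ((-1 : ℝ) ^ (n - i) * gBracket (boxMonomial t₁ t₂ t₃) n i) *
      choose_two_mul_div_eq n i hi'
  rw [gForm, hmain, hsum, G_eq_gForm, gForm]
  simp only [mul_sub, sum_sub_distrib, ← sum_mul]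
  linear_combination (-T 0) * inv_factorial_cube_add_sum_eq_zero n

theorem G_integral_recurrence :
    ∀ n : ℕ, 1 ≤ n → ∀ t₁ t₂ t₃ : ℝ, 0 < t₁ → t₁ < t₂ → t₂ < t₃ → t₃ < 1 →
      G (n + 1) t₁ t₂ t₃ =
        ∫ z in t₂..t₃, ∫ y in t₁..t₂, ∫ x in (0:ℝ)..t₁, G n x y z := by
  intro n _ t₁ t₂ t₃ _ _ _ _
  rw [← gForm_boxMonomial, ← integral_box_gForm_monomial₃]
  rfl
end

section
/- Let P_k be the Pell numbers (P_0=0, P_1=1, P_k = 2P_{k-1}+P_{k-2}). For all n ≥ 2 and reals 0 < a < b, ∫_0^a (x^{4n-2}/(4n-1)!) * ((4n-1)P_{2n-1} a - ((4n-2)P_{2n-1} - P_{2n-2}) x) * (b - x) dx = (a^{4n}/(4n+1)!) * ((4n+1) P_{2n} b - (4n P_{2n} - P_{2n-1}) a). -/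
theorem pell_integral_step
    (P : ℕ → ℤ) (hP0 : P 0 = 0) (hP1 : P 1 = 1)
    (hP : ∀ k : ℕ, 2 ≤ k → P k = 2 * P (k - 1) + P (k - 2)) :
    ∀ n : ℕ, 2 ≤ n → ∀ a b : ℝ, 0 < a → a < b →
      (∫ x in (0:ℝ)..a, x ^ (4 * n - 2) / (((4 * n - 1).factorial : ℝ)) *
          ((4 * (n : ℝ) - 1) * (P (2 * n - 1) : ℝ) * a -
            ((4 * (n : ℝ) - 2) * (P (2 * n - 1) : ℝ) - (P (2 * n - 2) : ℝ)) * x) *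
          (b - x)) =
        a ^ (4 * n) / (((4 * n + 1).factorial : ℝ)) *
          ((4 * (n : ℝ) + 1) * (P (2 * n) : ℝ) * b -
            (4 * (n : ℝ) * (P (2 * n) : ℝ) - (P (2 * n - 1) : ℝ)) * a) := by
  intro n hn a b ha hab
  obtain ⟨k, rfl⟩ : ∃ k, n = k + 2 := ⟨n - 2, by omega⟩
  rw [show 4 * (k + 2) - 2 = 4 * k + 6 by omega,
      show 4 * (k + 2) - 1 = 4 * k + 7 by omega,
      show 2 * (k + 2) - 1 = 2 * k + 3 by omega,
      show 2 * (k + 2) - 2 = 2 * k + 2 by omega,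
      show 4 * (k + 2) = 4 * k + 8 by omega,
      show 2 * (k + 2) = 2 * k + 4 by omega,
      show 4 * k + 8 + 1 = 4 * k + 9 by omega]
  push_cast
  set D : ℝ := ((4 * k + 7).factorial : ℝ) with hD
  have hDpos : (0:ℝ) < D := by positivity
  set p : ℝ := (P (2 * k + 3) : ℝ)
  set q : ℝ := (P (2 * k + 2) : ℝ)
  set c1 : ℝ := (4 * ((k:ℝ) + 2) - 1) * p
  set c2 : ℝ := (4 * ((k:ℝ) + 2) - 2) * p - q
  have I : ∀ (c : ℝ) (m : ℕ), (∫ x in (0:ℝ)..a, c * x ^ m) = c * a ^ (m + 1) / (m + 1) := by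
    intro c m
    rw [intervalIntegral.integral_const_mul, integral_pow]
    rw [zero_pow (by omega : m + 1 ≠ 0)]
    ring
  have key : (fun x : ℝ => x ^ (4 * k + 6) / D * (c1 * a - c2 * x) * (b - x)) =
      fun x : ℝ => (c1 * a * b / D) * x ^ (4 * k + 6) +
        (-(c1 * a + c2 * b) / D) * x ^ (4 * k + 7) + (c2 / D) * x ^ (4 * k + 8) := by
    funext x
    have e1 : x ^ (4 * k + 7) = x ^ (4 * k + 6) * x := by ring
    have e2 : x ^ (4 * k + 8) = x ^ (4 * k + 6) * x * x := by ring
    rw [e1, e2]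
    field_simp
    ring
  have hint : ∀ (c : ℝ) (m : ℕ),
      IntervalIntegrable (fun x : ℝ => c * x ^ m) MeasureTheory.volume 0 a :=
    fun c m => ((continuous_const.mul (continuous_pow m)).intervalIntegrable 0 a)
  calc (∫ x in (0:ℝ)..a, x ^ (4 * k + 6) / D * (c1 * a - c2 * x) * (b - x))
      = ∫ x in (0:ℝ)..a, ((c1 * a * b / D) * x ^ (4 * k + 6) +
          (-(c1 * a + c2 * b) / D) * x ^ (4 * k + 7)) + (c2 / D) * x ^ (4 * k + 8) := by
        rw [show (fun x : ℝ => x ^ (4 * k + 6) / D * (c1 * a - c2 * x) * (b - x)) =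
          fun x : ℝ => ((c1 * a * b / D) * x ^ (4 * k + 6) +
            (-(c1 * a + c2 * b) / D) * x ^ (4 * k + 7)) + (c2 / D) * x ^ (4 * k + 8) from by
          rw [key]]
    _ = (c1 * a * b / D) * a ^ (4 * k + 7) / (4 * k + 7 : ℕ)
          + (-(c1 * a + c2 * b) / D) * a ^ (4 * k + 8) / (4 * k + 8 : ℕ)
          + (c2 / D) * a ^ (4 * k + 9) / (4 * k + 9 : ℕ) := by
        rw [intervalIntegral.integral_add ((hint _ _).add (hint _ _)) (hint _ _),
            intervalIntegral.integral_add (hint _ _) (hint _ _), I, I, I]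
        push_cast
        ring
    _ = a ^ (4 * k + 8) / ((4 * k + 9).factorial : ℝ) *
          ((4 * ((k:ℝ) + 2) + 1) * (P (2 * k + 4) : ℝ) * b -
            (4 * ((k:ℝ) + 2) * (P (2 * k + 4) : ℝ) - p) * a) := by
        have hPell : (P (2 * k + 4) : ℝ) = 2 * p + q := by
          have h := hP (2 * k + 4) (by omega)
          rw [show 2 * k + 4 - 1 = 2 * k + 3 by omega,
              show 2 * k + 4 - 2 = 2 * k + 2 by omega] at h
          rw [h]; push_cast; ring
        have hf : ((4 * k + 9).factorial : ℝ) =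
            ((4 * k + 9 : ℕ) : ℝ) * ((4 * k + 8 : ℕ) : ℝ) * D := by
          rw [hD, show 4 * k + 9 = (4 * k + 8) + 1 from rfl, Nat.factorial_succ,
              show 4 * k + 8 = (4 * k + 7) + 1 from rfl, Nat.factorial_succ]
          push_cast; ring
        rw [hPell, hf]
        have h7 : ((4 * k + 7 : ℕ) : ℝ) ≠ 0 := by positivity
        have h8 : ((4 * k + 8 : ℕ) : ℝ) ≠ 0 := by positivity
        have h9 : ((4 * k + 9 : ℕ) : ℝ) ≠ 0 := by positivity
        have hc1 : c1 = ((4 * k + 7 : ℕ) : ℝ) * p := by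
          simp only [c1]; push_cast; ring
        rw [hc1]
        simp only [c2]
        field_simp
        push_cast
        ring
end
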